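/- arXiv:1005.1303 — 4 statements merged into one kernel-verified Lean document; each statement's English description precedes it below -/
import Mathlib

section
/- Let p, q ≥ 1, m_1,…,m_q ≥ 1, n_1,…,n_p ≥ 1 be integers with N := m_1+…+m_q = n_1+…+n_p, set M_0 = 0, M_r = m_1+…+m_r, N_0 = 0, N_l = n_1+…+n_l. Let E ⊆ ℝ be measurable, V : ℝ → ℝ and ψ_1,…,ψ_q, φ_1,…,φ_p : ℝ → ℝ measurable with ∫_E |x|^k |ψ_r(x) φ_l(x)| e^{−V(x)} dx < ∞ for all 1 ≤ r ≤ q, 1 ≤ l ≤ p and 0 ≤ k ≤ 2N−2. Define ψ̃_{M_{r−1}+1+i}(x) := x^i ψ_r(x) for 0 ≤ i ≤ m_r−1 and φ̃_{N_{l−1}+1+j}(x) := x^j φ_l(x) for 0 ≤ j ≤ n_l−1. Then N!·∫_{E^N} (∏_{i=1}^N e^{−V(x_i)}) det[ψ̃_i(x_j)]_{1≤i,j≤N} det[φ̃_i(x_j)]_{1≤i,j≤N} dx = (N!/(m_1!⋯m_q!))·(N!/(n_1!⋯n_p!)) · ∫_{E^N} (∏_{i=1}^N e^{−V(x_i)})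 · (∏_{r=1}^q Δ_{m_r}(x_{M_{r−1}+1},…,x_{M_r}) ∏_{i=M_{r−1}+1}^{M_r} ψ_r(x_i)) · ( Σ_{σ ∈ S_N} sgn(σ) ∏_{l=1}^p Δ_{n_l}(x_{σ(N_{l−1}+1)},…,x_{σ(N_l)}) ∏_{i=N_{l−1}+1}^{N_l} φ_l(x_{σ(i)}) ) dx. -/
open MeasureTheory Finset

/-- Partial sum `M_k = Σ_{j<k} m_j` of the block sizes. -/
def Msum {q : ℕ} (m : Fin q → ℕ) (k : ℕ) : ℕ :=
  ∑ j ∈ Finset.univ.filter (fun j : Fin q => (j : ℕ) < k), m j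

theorem Msum_add_lt {q : ℕ} (m : Fin q → ℕ) (r : Fin q) (i : Fin (m r)) :
    Msum m (r : ℕ) + (i : ℕ) < ∑ j, m j := by
  have h2 : m r ≤ ∑ j ∈ Finset.univ.filter (fun j : Fin q => ¬ (j : ℕ) < (r : ℕ)), m j :=
    Finset.single_le_sum (fun j _ => Nat.zero_le (m j)) (by simp)
  have h3 : Msum m (r : ℕ) +
      ∑ j ∈ Finset.univ.filter (fun j : Fin q => ¬ (j : ℕ) < (r : ℕ)), m j = ∑ j, m j :=
    Finset.sum_filter_add_sum_filter_not _ _ _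
  have h4 := i.isLt
  omega

/-- The index `M_{r−1} + i` of the `i`-th element of the `r`-th block (`0`-based). -/
def blkIdx {q : ℕ} (m : Fin q → ℕ) (r : Fin q) (i : Fin (m r)) : Fin (∑ j, m j) :=
  ⟨Msum m (r : ℕ) + (i : ℕ), Msum_add_lt m r i⟩

theorem Msum_block_le {q : ℕ} (m : Fin q → ℕ) {u u' : Fin q} (h : u < u') :
    Msum m (u : ℕ) + m u ≤ Msum m (u' : ℕ) := by
  have hsub : insert u (Finset.univ.filter (fun j : Fin q => (j : ℕ) < (u : ℕ)))
      ⊆ Finset.univ.filter (fun j : Fin q => (j : ℕ) < (u' : ℕ)) := by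
    intro j hj
    simp only [Finset.mem_insert, Finset.mem_filter, Finset.mem_univ, true_and] at hj ⊢
    have huu' : (u : ℕ) < (u' : ℕ) := h
    rcases hj with rfl | hj
    · exact huu'
    · omega
  have hle := Finset.sum_le_sum_of_subset (f := m) hsub
  rw [Finset.sum_insert (by simp)] at hle
  unfold Msum
  omega

theorem blkIdx_injective {q : ℕ} (m : Fin q → ℕ) :
    Function.Injective (fun x : Σ r : Fin q, Fin (m r) => blkIdx m x.1 x.2) := by
  rintro ⟨r, i⟩ ⟨r', i'⟩ h
  have hval : Msum m (r : ℕ) + (i : ℕ) = Msum m (r' : ℕ) + (i' : ℕ) := congrArg Fin.val h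
  rcases lt_trichotomy r r' with hlt | heq | hgt
  · exact absurd hval (by have h1 := Msum_block_le m hlt; have h2 := i.isLt; omega)
  · subst heq
    have : i = i' := Fin.ext (by omega)
    rw [this]
  · exact absurd hval (by have h1 := Msum_block_le m hgt; have h2 := i'.isLt; omega)

/-- The canonical (order-preserving) equivalence between `Σ r, Fin (m r)` and `Fin (Σ m)`,
sending `(r, i)` to `M_{r−1} + i`. -/
noncomputable def blkEquiv {q : ℕ} (m : Fin q → ℕ) : (Σ r : Fin q, Fin (m r)) ≃ Fin (∑ j, m j) :=
  Equiv.ofBijective (fun x => blkIdx m x.1 x.2)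
    ((Fintype.bijective_iff_injective_and_card _).mpr
      ⟨blkIdx_injective m, by simp [Fintype.card_sigma]⟩)

/-- The Vandermonde determinant `Δ_k(y) = ∏_{i<j} (y_j − y_i)`. -/
def vdm {k : ℕ} (y : Fin k → ℝ) : ℝ :=
  ∏ i : Fin k, ∏ j ∈ Finset.Ioi i, (y j - y i)

/-- The family `ψ̃` defined by `ψ̃_{M_{r−1}+1+i}(x) := x^i ψ_r(x)` for `0 ≤ i ≤ m_r − 1`. -/
noncomputable def psiTilde {q : ℕ} (m : Fin q → ℕ) {N : ℕ} (hm : ∑ r, m r = N)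
    (ψ : Fin q → ℝ → ℝ) (idx : Fin N) : ℝ → ℝ := fun x =>
  x ^ ((((blkEquiv m).symm ((finCongr hm).symm idx)).2 : ℕ)) *
    ψ (((blkEquiv m).symm ((finCongr hm).symm idx)).1) x

/-!
Expanding each Vandermonde factor `Δ_{m_r}` as a determinant writes the `ψ`-factor `G(x)` of the
right-hand side as a signed sum, over the permutations preserving the blocks, of products of
entries `ψ̃_i(x_j)`; antisymmetrizing `G` over `S_N` therefore gives `m_1!⋯m_q! det[ψ̃_i(x_j)]`,
and likewise for `φ`. Since the weight `∏ e^{-V(x_i)}` and the measure on `E^N` are invariant under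
permuting coordinates while `det[φ̃_i(x_j)]` is alternating, integrating the antisymmetrization of
`G` against `det[φ̃_i(x_j)]` gives `N!` times the integral of `G` itself.
-/

open Equiv

namespace Equiv.Perm

variable {α : Type*} {β : α → Type*}

theorem sigmaCongrRight_mulSingle [DecidableEq α] (a : α) (π : Perm (β a)) :
    sigmaCongrRight (Pi.mulSingle a π) = π.extendDomain (sigmaSubtype a).symm := by
  ext ⟨b, i⟩ : 1
  rcases eq_or_ne b a with rfl | hb
  · rw [extendDomain_apply_subtype (p := fun s : Sigma β => s.1 = b) _ _ rfl]
    simp [sigmaSubtype]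
  · rw [extendDomain_apply_not_subtype (p := fun s : Sigma β => s.1 = a) _ _ hb]
    simp [hb]

theorem sign_sigmaCongrRight [Fintype α] [DecidableEq α] [∀ a, Fintype (β a)]
    [∀ a, DecidableEq (β a)] (τ : ∀ a, Perm (β a)) :
    sign (sigmaCongrRight τ) = ∏ a, sign (τ a) := by
  suffices ∀ s : Finset α,
      sign (sigmaCongrRight fun a => if a ∈ s then τ a else 1) = ∏ a ∈ s, sign (τ a) by
    simpa using this Finset.univ
  intro s
  induction s using Finset.induction_on with
  | empty => exact (congrArg sign sigmaCongrRight_one).trans (map_one _)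
  | insert a s ha ih =>
    have hsplit : (fun b => if b ∈ insert a s then τ b else 1) =
        Pi.mulSingle a (τ a) * fun b => if b ∈ s then τ b else 1 := by
      funext b
      rcases eq_or_ne b a with rfl | hb
      · simp [ha]
      · simp [hb]
    rw [hsplit, ← sigmaCongrRight_mul, map_mul, sigmaCongrRight_mulSingle, sign_extendDomain, ih,
      Finset.prod_insert ha]

end Equiv.Perm

namespace Matrix

variable {R ι α : Type*} {β : α → Type*} [CommRing R] [Fintype ι] [DecidableEq ι] [Fintype α]
  [DecidableEq α] [∀ a, Fintype (β a)] [∀ a, DecidableEq (β a)]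

theorem prod_det_blockDiag'_submatrix (e : (Σ a, β a) ≃ ι) (A : Matrix ι ι R) :
    ∏ a, ((A.submatrix e e).blockDiag' a).det =
      ∑ τ : ∀ a, Perm (β a), (Perm.sign (e.permCongr (Perm.sigmaCongrRight τ)) : R) *
        ∏ j, A (e.permCongr (Perm.sigmaCongrRight τ) j) j := by
  simp_rw [det_apply', Fintype.prod_sum]
  refine Fintype.sum_congr _ _ fun τ => ?_
  rw [Finset.prod_mul_distrib, Perm.sign_permCongr, Perm.sign_sigmaCongrRight]
  congr 1
  · push_cast
    rfl
  · rw [← Equiv.prod_comp e, ← Fintype.prod_sigma']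
    simp only [Equiv.permCongr_apply, Equiv.symm_apply_apply]
    rfl

theorem sum_sign_mul_prod_det_blockDiag'_submatrix (e : (Σ a, β a) ≃ ι) (A : Matrix ι ι R) :
    ∑ σ : Perm ι, (Perm.sign σ : R) * ∏ a, (((A.submatrix id σ).submatrix e e).blockDiag' a).det =
      (∏ a, ((Fintype.card (β a)).factorial : R)) * A.det := by
  set P : (∀ a, Perm (β a)) → Perm ι := fun τ => e.permCongr (Perm.sigmaCongrRight τ)
  calc ∑ σ : Perm ι, (Perm.sign σ : R) * ∏ a, (((A.submatrix id σ).submatrix e e).blockDiag' a).det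
      = ∑ τ, (Perm.sign (P τ) : R) * ∑ σ : Perm ι, (Perm.sign σ : R) *
          ∏ j, (Aᵀ.submatrix id (P τ)) (σ j) j := by
        simp_rw [prod_det_blockDiag'_submatrix, Finset.mul_sum]
        rw [Finset.sum_comm]
        refine Fintype.sum_congr _ _ fun τ => Fintype.sum_congr _ _ fun σ => ?_
        simp only [submatrix_apply, transpose_apply, id]
        ring
    _ = ∑ _τ : ∀ a, Perm (β a), A.det := by
        refine Fintype.sum_congr _ _ fun τ => ?_
        rw [← det_apply', det_permute', det_transpose, ← mul_assoc, ← Int.cast_mul,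
          ← Units.val_mul, Int.units_mul_self, Units.val_one, Int.cast_one, one_mul]
    _ = (∏ a, ((Fintype.card (β a)).factorial : R)) * A.det := by
        simp [Fintype.card_pi, Fintype.card_perm]

end Matrix

namespace MeasureTheory

variable {ι α : Type*} [Fintype ι] [MeasurableSpace α] (μ : Measure α) [SigmaFinite μ]

theorem integrable_prod_mul_sum_mul_sum {S T : Type*} [Fintype S] [Fintype T] (w : α → ℝ)
    (c : S → ℝ) (f : S → ι → α → ℝ) (d : T → ℝ) (g : T → ι → α → ℝ)
    (h : ∀ s t j, Integrable (fun a => w a * f s j a * g t j a) μ) :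
    Integrable (fun x : ι → α => (∏ j, w (x j)) * (∑ s, c s * ∏ j, f s j (x j)) *
      (∑ t, d t * ∏ j, g t j (x j))) (Measure.pi fun _ => μ) := by
  have hexpand : (fun x : ι → α => (∏ j, w (x j)) * (∑ s, c s * ∏ j, f s j (x j)) *
      (∑ t, d t * ∏ j, g t j (x j))) = fun x => ∑ s, ∑ t,
        (c s * d t) * ∏ j, (w (x j) * f s j (x j) * g t j (x j)) := by
    funext x
    simp only [Finset.mul_sum, Finset.sum_mul, Finset.prod_mul_distrib]
    rw [Finset.sum_comm]
    exact Finset.sum_congr rfl fun s _ => Finset.sum_congr rfl fun t _ => by ring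
  rw [hexpand]
  exact integrable_finsetSum _ fun s _ => integrable_finsetSum _ fun t _ =>
    (Integrable.fintype_prod fun j => h s t j).const_mul _

theorem integral_sum_comp_perm [DecidableEq ι] {E : Type*} [NormedAddCommGroup E]
    [NormedSpace ℝ E] {F : (ι → α) → E} (hF : Integrable F (Measure.pi fun _ => μ)) :
    ∫ x, ∑ σ : Perm ι, F (x ∘ σ) ∂Measure.pi (fun _ => μ) =
      (Fintype.card ι).factorial • ∫ x, F x ∂Measure.pi (fun _ => μ) := by
  have hσ (σ : Perm ι) := measurePreserving_arrowCongr' (fun _ => μ) (fun _ => μ) σ.symm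
    (MeasurableEquiv.refl α) fun _ => MeasurePreserving.id μ
  have hint (σ : Perm ι) : Integrable (fun x => F (x ∘ σ)) (Measure.pi fun _ => μ) :=
    (hσ σ).integrable_comp_of_integrable hF
  have hcomp (σ : Perm ι) :
      ∫ x, F (x ∘ σ) ∂Measure.pi (fun _ => μ) = ∫ x, F x ∂Measure.pi (fun _ => μ) :=
    (hσ σ).integral_comp' F
  rw [integral_finsetSum _ fun σ _ => hint σ]
  simp [hcomp, Fintype.card_perm]

theorem mul_integral_eq_factorial_mul_integral_of_antisymmetrization [DecidableEq ι]
    {G Ψ H : (ι → α) → ℝ} (w : α → ℝ) (c : ℝ)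
    (hΨ : ∀ x, ∑ σ : Perm ι, (Perm.sign σ : ℝ) * G (x ∘ σ) = c * Ψ x)
    (hH : ∀ (σ : Perm ι) x, H (x ∘ σ) = Perm.sign σ * H x)
    (hint : Integrable (fun x => (∏ j, w (x j)) * G x * H x) (Measure.pi fun _ => μ)) :
    c * ∫ x, (∏ j, w (x j)) * Ψ x * H x ∂Measure.pi (fun _ => μ) =
      (Fintype.card ι).factorial * ∫ x, (∏ j, w (x j)) * G x * H x ∂Measure.pi (fun _ => μ) := by
  have hsymm (x : ι → α) : c * ((∏ j, w (x j)) * Ψ x * H x) =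
      ∑ σ : Perm ι, (∏ j, w ((x ∘ σ) j)) * G (x ∘ σ) * H (x ∘ σ) := by
    rw [show c * ((∏ j, w (x j)) * Ψ x * H x) = (∏ j, w (x j)) * H x * (c * Ψ x) by ring, ← hΨ,
      Finset.mul_sum]
    refine Finset.sum_congr rfl fun σ _ => ?_
    rw [hH, Function.comp_def, Equiv.prod_comp σ fun j => w (x j)]
    ring
  rw [← integral_const_mul]
  simp_rw [hsymm]
  rw [integral_sum_comp_perm μ hint, nsmul_eq_mul]

end MeasureTheory

theorem vdm_mul_prod_eq_det {k : ℕ} (y c : Fin k → ℝ) :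
    vdm y * ∏ j, c j = (Matrix.of fun i j : Fin k => y j ^ (i : ℕ) * c j).det := by
  rw [vdm, ← Matrix.det_vandermonde, ← Matrix.det_transpose, mul_comm, ← Matrix.det_mul_row]
  congr 1
  ext i j
  simp [mul_comm]

section BlockFamily

variable {q N : ℕ} (m : Fin q → ℕ) (hm : ∑ r, m r = N)

noncomputable def blockIndexEquiv : (Σ r, Fin (m r)) ≃ Fin N := (blkEquiv m).trans (finCongr hm)

theorem val_snd_lt_sum (s : Σ r, Fin (m r)) : (s.2 : ℕ) < ∑ r, m r :=
  s.2.isLt.trans_le (Finset.single_le_sum (fun r _ => Nat.zero_le (m r)) (Finset.mem_univ s.1))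

theorem psiTilde_blockIndexEquiv (ψ : Fin q → ℝ → ℝ) (s : Σ r, Fin (m r)) (t : ℝ) :
    psiTilde m hm ψ (blockIndexEquiv m hm s) t = t ^ (s.2 : ℕ) * ψ s.1 t := by
  change t ^ ((blockIndexEquiv m hm).symm (blockIndexEquiv m hm s)).2.val *
    ψ ((blockIndexEquiv m hm).symm (blockIndexEquiv m hm s)).1 t = _
  rw [Equiv.symm_apply_apply]

theorem prod_vdm_mul_prod_eq_prod_det (ψ : Fin q → ℝ → ℝ) (x : Fin N → ℝ) :
    ∏ r, (vdm (fun i => x (finCongr hm (blkIdx m r i))) *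
        ∏ i, ψ r (x (finCongr hm (blkIdx m r i)))) =
      ∏ r, (((Matrix.of fun i j => psiTilde m hm ψ i (x j)).submatrix (blockIndexEquiv m hm)
        (blockIndexEquiv m hm)).blockDiag' r).det := by
  refine Finset.prod_congr rfl fun r _ => ?_
  rw [vdm_mul_prod_eq_det]
  congr 1
  ext i j
  exact (psiTilde_blockIndexEquiv m hm ψ ⟨r, i⟩ _).symm

theorem sum_sign_mul_prod_vdm_mul_prod (ψ : Fin q → ℝ → ℝ) (x : Fin N → ℝ) :
    ∑ σ : Perm (Fin N), ((Perm.sign σ : ℤ) : ℝ) *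
        ∏ r, (vdm (fun i => x (σ (finCongr hm (blkIdx m r i)))) *
          ∏ i, ψ r (x (σ (finCongr hm (blkIdx m r i))))) =
      (∏ r, ((m r).factorial : ℝ)) * (Matrix.of fun i j => psiTilde m hm ψ i (x j)).det := by
  have h := Matrix.sum_sign_mul_prod_det_blockDiag'_submatrix (blockIndexEquiv m hm)
    (Matrix.of fun i j => psiTilde m hm ψ i (x j))
  simp only [Fintype.card_fin] at h
  rw [← h]
  exact Finset.sum_congr rfl fun σ _ => congrArg _ (prod_vdm_mul_prod_eq_prod_det m hm ψ (x ∘ σ))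

end BlockFamily

section Integrability

variable {p q N : ℕ} {m : Fin q → ℕ} {n : Fin p → ℕ} {E : Set ℝ} {V : ℝ → ℝ}
  {ψ : Fin q → ℝ → ℝ} {φ : Fin p → ℝ → ℝ}

theorem integrable_exp_mul_psiTilde_mul_psiTilde (hm : ∑ r, m r = N) (hn : ∑ l, n l = N)
    (hV : Measurable V) (hψ : ∀ r, Measurable (ψ r)) (hφ : ∀ l, Measurable (φ l))
    (hint : ∀ (r : Fin q) (l : Fin p) (k : ℕ), k ≤ 2 * N - 2 →
      IntegrableOn (fun x => |x| ^ k * |ψ r x * φ l x| * Real.exp (-V x)) E) (a b : Fin N) :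
    IntegrableOn (fun t => Real.exp (-V t) * psiTilde m hm ψ a t * psiTilde n hn φ b t) E := by
  obtain ⟨s, rfl⟩ := (blockIndexEquiv m hm).surjective a
  obtain ⟨s', rfl⟩ := (blockIndexEquiv n hn).surjective b
  simp_rw [psiTilde_blockIndexEquiv]
  have hk : (s.2 : ℕ) + s'.2 ≤ 2 * N - 2 := by
    have := val_snd_lt_sum m s
    have := val_snd_lt_sum n s'
    omega
  refine (hint s.1 s'.1 _ hk).mono' (by fun_prop) (ae_of_all _ fun t => le_of_eq ?_)
  simp only [Real.norm_eq_abs, abs_mul, abs_pow, Real.abs_exp, pow_add]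
  ring

theorem integrable_prod_exp_mul_prod_vdm_mul_det (hm : ∑ r, m r = N) (hn : ∑ l, n l = N)
    (hV : Measurable V) (hψ : ∀ r, Measurable (ψ r)) (hφ : ∀ l, Measurable (φ l))
    (hint : ∀ (r : Fin q) (l : Fin p) (k : ℕ), k ≤ 2 * N - 2 →
      IntegrableOn (fun x => |x| ^ k * |ψ r x * φ l x| * Real.exp (-V x)) E) :
    Integrable (fun x : Fin N → ℝ => (∏ j, Real.exp (-V (x j))) *
        (∏ r, (vdm (fun i => x (finCongr hm (blkIdx m r i))) *
          ∏ i, ψ r (x (finCongr hm (blkIdx m r i))))) *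
        (Matrix.of fun i j => psiTilde n hn φ i (x j)).det)
      (Measure.pi fun _ => volume.restrict E) := by
  simp_rw [prod_vdm_mul_prod_eq_prod_det, Matrix.prod_det_blockDiag'_submatrix, Matrix.det_apply',
    Matrix.of_apply]
  exact integrable_prod_mul_sum_mul_sum _ _ _ _ _ _ fun τ π j =>
    integrable_exp_mul_psiTilde_mul_psiTilde hm hn hV hψ hφ hint _ _

end Integrability

theorem block_determinant_integral_identity_general (p q N : ℕ) (m : Fin q → ℕ) (n : Fin p → ℕ)
    (hm : ∑ r, m r = N) (hn : ∑ l, n l = N) (E : Set ℝ) (V : ℝ → ℝ) (hV : Measurable V)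
    (ψ : Fin q → ℝ → ℝ) (φ : Fin p → ℝ → ℝ)
    (hψ : ∀ r, Measurable (ψ r)) (hφ : ∀ l, Measurable (φ l))
    (hint : ∀ (r : Fin q) (l : Fin p) (k : ℕ), k ≤ 2 * N - 2 →
      IntegrableOn (fun x => |x| ^ k * |ψ r x * φ l x| * Real.exp (-V x)) E) :
    (N.factorial : ℝ) *
        ∫ x : Fin N → ℝ in Set.univ.pi (fun _ => E),
          (∏ i, Real.exp (-V (x i))) *
            Matrix.det (Matrix.of fun i j => psiTilde m hm ψ i (x j)) *
            Matrix.det (Matrix.of fun i j => psiTilde n hn φ i (x j)) =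
      ((N.factorial : ℝ) / ∏ r, ((m r).factorial : ℝ)) *
        ((N.factorial : ℝ) / ∏ l, ((n l).factorial : ℝ)) *
        ∫ x : Fin N → ℝ in Set.univ.pi (fun _ => E),
          (∏ i, Real.exp (-V (x i))) *
            (∏ r : Fin q,
              (vdm (fun i : Fin (m r) => x (finCongr hm (blkIdx m r i))) *
                ∏ i : Fin (m r), ψ r (x (finCongr hm (blkIdx m r i))))) *
            (∑ σ : Equiv.Perm (Fin N), ((Equiv.Perm.sign σ : ℤ) : ℝ) *
              ∏ l : Fin p,
                (vdm (fun j : Fin (n l) => x (σ (finCongr hn (blkIdx n l j)))) *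
                  ∏ j : Fin (n l), φ l (x (σ (finCongr hn (blkIdx n l j)))))) := by
  rw [volume_pi, Measure.restrict_pi_pi]
  simp_rw [sum_sign_mul_prod_vdm_mul_prod n hn φ, mul_left_comm _ (∏ l, ((n l).factorial : ℝ)),
    integral_const_mul]
  have hantisymm := mul_integral_eq_factorial_mul_integral_of_antisymmetrization (volume.restrict E)
    (G := fun x => ∏ r, (vdm (fun i => x (finCongr hm (blkIdx m r i))) *
      ∏ i, ψ r (x (finCongr hm (blkIdx m r i)))))
    (fun t => Real.exp (-V t)) _ (sum_sign_mul_prod_vdm_mul_prod m hm ψ)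
    (fun σ x => Matrix.det_permute' σ (Matrix.of fun i j => psiTilde n hn φ i (x j)))
    (integrable_prod_exp_mul_prod_vdm_mul_det hm hn hV hψ hφ hint)
  rw [Fintype.card_fin] at hantisymm
  field_simp
  linear_combination hantisymm

/-- Proposition 2.1, second identity: the `N`-fold integral of the product of the two
block-structured determinants equals the multinomial-weighted `N`-fold integral of the product
of the `ψ`-block Vandermonde factors with the signed sum over permutations of the `φ`-block
Vandermonde factors. -/
theorem block_determinant_integral_identity (p q N : ℕ) (hp : 1 ≤ p) (hq : 1 ≤ q)
    (m : Fin q → ℕ) (n : Fin p → ℕ) (hm1 : ∀ r, 1 ≤ m r) (hn1 : ∀ l, 1 ≤ n l)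
    (hm : ∑ r, m r = N) (hn : ∑ l, n l = N)
    (E : Set ℝ) (hE : MeasurableSet E) (V : ℝ → ℝ) (hV : Measurable V)
    (ψ : Fin q → ℝ → ℝ) (φ : Fin p → ℝ → ℝ)
    (hψ : ∀ r, Measurable (ψ r)) (hφ : ∀ l, Measurable (φ l))
    (hint : ∀ (r : Fin q) (l : Fin p) (k : ℕ), k ≤ 2 * N - 2 →
      IntegrableOn (fun x => |x| ^ k * |ψ r x * φ l x| * Real.exp (-V x)) E) :
    (N.factorial : ℝ) *
        ∫ x : Fin N → ℝ in Set.univ.pi (fun _ => E),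
          (∏ i, Real.exp (-V (x i))) *
            Matrix.det (Matrix.of fun i j => psiTilde m hm ψ i (x j)) *
            Matrix.det (Matrix.of fun i j => psiTilde n hn φ i (x j)) =
      ((N.factorial : ℝ) / ∏ r, ((m r).factorial : ℝ)) *
        ((N.factorial : ℝ) / ∏ l, ((n l).factorial : ℝ)) *
        ∫ x : Fin N → ℝ in Set.univ.pi (fun _ => E),
          (∏ i, Real.exp (-V (x i))) *
            (∏ r : Fin q,
              (vdm (fun i : Fin (m r) => x (finCongr hm (blkIdx m r i))) *
                ∏ i : Fin (m r), ψ r (x (finCongr hm (blkIdx m r i))))) *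
            (∑ σ : Equiv.Perm (Fin N), ((Equiv.Perm.sign σ : ℤ) : ℝ) *
              ∏ l : Fin p,
                (vdm (fun j : Fin (n l) => x (σ (finCongr hn (blkIdx n l j)))) *
                  ∏ j : Fin (n l), φ l (x (σ (finCongr hn (blkIdx n l j)))))) :=
  block_determinant_integral_identity_general p q N m n hm hn E V hV ψ φ hψ hφ hint
end

section
/- For all integers k, l ∈ ℤ and every constant n ∈ ℝ, the operators satisfy the mixed relation 𝕁^{(2)}_{k,n} ∘ 𝕁^{(1)}_{l,n} − 𝕁^{(1)}_{l,n} ∘ 𝕁^{(2)}_{k,n} = −l·𝕁^{(1)}_{k+l,n} + (k(k+1)/2)·δ_{k,−l}·id as linear endomorphisms of R = ℝ[t_1, t_2, t_3, …]. -/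
/-!
Put `a_m := ∂/∂t_m + (−m) t_{−m}·`, so that `a_m = ∂/∂t_m` for `m > 0` and `a_{−m} = m t_m·`.
From `[∂/∂t_i, t_j·] = δ_{ij}` one gets the Heisenberg relations `[a_k, a_l] = k δ_{k,−l}`.
Now `𝕁^{(1)}_{l,n} = a_l + n δ_{l,0}` and `𝕁^{(2)}_{k,n} = L_k + (n + (k+1)/2) a_k + c`, where
`L_k = ½ Σ_{i+j=k} :a_i a_j:` is the Sugawara operator and `c` is a scalar. The Leibniz rule
`[AB, C] = A[B, C] + [A, C]B` turns each quadratic term of `L_k` into at most two copies of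
`a_{k+l}`, and these add up to `[L_k, a_l] = −l a_{k+l}`. Hence the bracket is
`−l a_{k+l} + (n + (k+1)/2) k δ_{k,−l}`, and for `k = −l` the scalar `(n + (k+1)/2) k` is
`−l n + k(k+1)/2`.

The middle sum `Σ_{i ≥ 1} i t_i ∂/∂t_{i+k}` of `L_k` is infinite, but on polynomials in
`t_1, …, t_M` it agrees with its truncation at any `N ≥ M − k`. With that truncation, every
operator is an element of the ring `End(ℝ[t])` and the computation takes place there.
-/

open MvPolynomial

/-- `∂/∂t_m` on `ℝ[t_1, t_2, …]`, with the convention that it is `0` for `m ≤ 0`. -/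
noncomputable def Dt (m : ℤ) : MvPolynomial ℕ+ ℝ → MvPolynomial ℕ+ ℝ :=
  if h : 0 < m then fun p => MvPolynomial.pderiv (⟨m.toNat, by omega⟩ : ℕ+) p else fun _ => 0

/-- Multiplication by `t_m` on `ℝ[t_1, t_2, …]`, with the convention `t_m = 0` for `m ≤ 0`. -/
noncomputable def Xt (m : ℤ) : MvPolynomial ℕ+ ℝ → MvPolynomial ℕ+ ℝ :=
  if h : 0 < m then
    fun p => (MvPolynomial.X (⟨m.toNat, by omega⟩ : ℕ+) : MvPolynomial ℕ+ ℝ) * p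
  else fun _ => 0

/-- `𝕁^{(1)}_{m,n} = ∂/∂t_m + (−m) t_{−m}· + n δ_{m,0}`. -/
noncomputable def J1 (m : ℤ) (n : ℝ) (p : MvPolynomial ℕ+ ℝ) : MvPolynomial ℕ+ ℝ :=
  Dt m p + ((-m : ℤ) : ℝ) • Xt (-m) p + (if m = 0 then n else 0) • p

/-- `𝕁^{(2)}_{m,n} = (1/2)(Σ_{i+j=m} ∂²/∂t_i∂t_j + 2Σ_{i≥1} i t_i ∂/∂t_{i+m}
+ Σ_{i+j=−m} (i t_i)(j t_j)·) + (n+(m+1)/2)(∂/∂t_m + (−m)t_{−m}·) + (n(n+1)/2)δ_{m,0}`;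
applied to a polynomial, all the sums have only finitely many nonzero terms. -/
noncomputable def J2 (m : ℤ) (n : ℝ) (p : MvPolynomial ℕ+ ℝ) : MvPolynomial ℕ+ ℝ :=
  (1 / 2 : ℝ) • ((∑ i ∈ Finset.Icc (1 : ℤ) (m - 1), Dt i (Dt (m - i) p))
      + (2 : ℝ) • (∑ᶠ i : ℕ+, ((i : ℕ) : ℝ) •
          ((MvPolynomial.X i : MvPolynomial ℕ+ ℝ) * Dt (((i : ℕ) : ℤ) + m) p))
      + (∑ i ∈ Finset.Icc (1 : ℤ) (-m - 1), ((i : ℝ) * ((-m - i : ℤ) : ℝ)) • Xt i (Xt (-m - i) p)))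
    + (n + ((m : ℝ) + 1) / 2) • (Dt m p + ((-m : ℤ) : ℝ) • Xt (-m) p)
    + (if m = 0 then n * (n + 1) / 2 else 0) • p

theorem MvPolynomial.pderiv_pderiv_comm {R σ : Type*} [CommRing R] (i j : σ)
    (p : MvPolynomial σ R) :
    pderiv i (pderiv j p) = pderiv j (pderiv i p) := by
  classical
  have h : ⁅pderiv i, pderiv j⁆ = (0 : Derivation R (MvPolynomial σ R) (MvPolynomial σ R)) :=
    derivation_ext fun k => by
      rw [Derivation.commutator_apply]; simp [pderiv_X, Pi.single_apply, apply_ite]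
  simpa [Derivation.commutator_apply, sub_eq_zero] using congr($h p)

/- On a ring, `⁅a, b⁆ = a * b - b * a` is `Ring.instBracket`. As `LieRing.ofAssociativeRing` is
not an instance, the `LieRing` API does not apply to it, so the identities we need are proved
directly; the scalar ones (`lie_smul`, `smul_lie` below) only on `Module.End`, since a generic
`SMul` does not unify with that of `LinearMap` when rewriting. -/
namespace Ring

variable {A : Type*} [Ring A]

theorem lie_add (a b c : A) : ⁅a, b + c⁆ = ⁅a, b⁆ + ⁅a, c⁆ := by
  simp only [lie_def, mul_add, add_mul]; abel

theorem add_lie (a b c : A) : ⁅a + b, c⁆ = ⁅a, c⁆ + ⁅b, c⁆ := by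
  simp only [lie_def, mul_add, add_mul]; abel

theorem sum_lie {ι : Type*} (s : Finset ι) (f : ι → A) (b : A) :
    ⁅∑ i ∈ s, f i, b⁆ = ∑ i ∈ s, ⁅f i, b⁆ := by
  simp only [lie_def, Finset.sum_mul, Finset.mul_sum, Finset.sum_sub_distrib]

theorem mul_lie (a b c : A) : ⁅a * b, c⁆ = a * ⁅b, c⁆ + ⁅a, c⁆ * b := by
  simp only [lie_def, mul_sub, sub_mul, mul_assoc]; abel

theorem lie_one (a : A) : ⁅a, (1 : A)⁆ = 0 := (Commute.one_right a).lie_eq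

theorem one_lie (a : A) : ⁅(1 : A), a⁆ = 0 := (Commute.one_left a).lie_eq

theorem lie_skew (a b : A) : -⁅b, a⁆ = ⁅a, b⁆ := by
  simp only [lie_def, neg_sub]

end Ring

namespace MixedRelation

local notation "𝒫" => MvPolynomial ℕ+ ℝ

local notation "𝔼" => Module.End ℝ (MvPolynomial ℕ+ ℝ)

theorem lie_smul (t : ℝ) (a b : 𝔼) : ⁅a, t • b⁆ = t • ⁅a, b⁆ := by
  simp only [Ring.lie_def, mul_smul_comm, smul_mul_assoc, smul_sub]

theorem smul_lie (t : ℝ) (a b : 𝔼) : ⁅t • a, b⁆ = t • ⁅a, b⁆ := by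
  simp only [Ring.lie_def, mul_smul_comm, smul_mul_assoc, smul_sub]

theorem coe_toNat_toPNat' {m : ℤ} (h : 0 < m) : ((m.toNat.toPNat' : ℕ) : ℤ) = m := by
  rw [Nat.toPNat'_coe, if_pos (by omega)]; omega

theorem toNat_toPNat'_inj {a b : ℤ} (ha : 0 < a) (hb : 0 < b) :
    a.toNat.toPNat' = b.toNat.toPNat' ↔ a = b :=
  ⟨fun h => by rw [← coe_toNat_toPNat' ha, ← coe_toNat_toPNat' hb, h], fun h => h ▸ rfl⟩

theorem toNat_toPNat'_eq_mk {m : ℤ} (h : 0 < m) : m.toNat.toPNat' = ⟨m.toNat, by omega⟩ :=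
  PNat.eq (by rw [Nat.toPNat'_coe, if_pos (by omega)]; rfl)

noncomputable def dEnd (m : ℤ) : 𝔼 :=
  if 0 < m then (pderiv m.toNat.toPNat' : Derivation ℝ 𝒫 𝒫).toLinearMap else 0

noncomputable def xEnd (m : ℤ) : 𝔼 :=
  if 0 < m then LinearMap.mulLeft ℝ (X m.toNat.toPNat' : 𝒫) else 0

theorem dEnd_of_nonpos {m : ℤ} (h : m ≤ 0) : dEnd m = 0 := if_neg h.not_gt

theorem xEnd_of_nonpos {m : ℤ} (h : m ≤ 0) : xEnd m = 0 := if_neg h.not_gt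

theorem dEnd_apply (m : ℤ) (p : 𝒫) : dEnd m p = Dt m p := by
  by_cases h : 0 < m
  · rw [dEnd, if_pos h, show Dt m = _ from dif_pos h, toNat_toPNat'_eq_mk h]; rfl
  · rw [dEnd_of_nonpos (not_lt.1 h), show Dt m = _ from dif_neg h]; rfl

theorem xEnd_apply (m : ℤ) (p : 𝒫) : xEnd m p = Xt m p := by
  by_cases h : 0 < m
  · rw [xEnd, if_pos h, show Xt m = _ from dif_pos h, toNat_toPNat'_eq_mk h]; rfl
  · rw [xEnd_of_nonpos (not_lt.1 h), show Xt m = _ from dif_neg h]; rfl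

theorem xEnd_natCast_apply (i : ℕ+) (p : 𝒫) : xEnd ((i : ℕ) : ℤ) p = X i * p := by
  rw [xEnd, if_pos (by simp), Int.toNat_natCast, PNat.coe_toPNat']
  rfl

theorem exists_forall_dEnd_apply_eq_zero (p : 𝒫) :
    ∃ M : ℤ, ∀ j, M < j → dEnd j p = 0 := by
  refine ⟨(p.vars.sup fun i : ℕ+ => (i : ℕ) : ℕ), fun j hj => ?_⟩
  have hj0 : 0 < j := by omega
  rw [dEnd, if_pos hj0]
  refine pderiv_eq_zero_of_notMem_vars fun hmem => ?_
  have hle := Finset.le_sup (f := fun i : ℕ+ => (i : ℕ)) hmem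
  have := coe_toNat_toPNat' hj0
  omega

theorem commute_dEnd (a b : ℤ) : Commute (dEnd a) (dEnd b) := by
  unfold dEnd
  split_ifs
  · exact LinearMap.ext fun p => pderiv_pderiv_comm ..
  all_goals simp

theorem commute_xEnd (a b : ℤ) : Commute (xEnd a) (xEnd b) := by
  unfold xEnd
  split_ifs
  · exact LinearMap.ext fun p => mul_left_comm ..
  all_goals simp

theorem lie_dEnd_xEnd (a b : ℤ) : ⁅dEnd a, xEnd b⁆ = if a = b ∧ 0 < a then 1 else 0 := by
  rcases le_or_gt a 0 with ha | ha
  · simp [dEnd_of_nonpos ha, Ring.lie_def, ha.not_gt]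
  rcases le_or_gt b 0 with hb | hb
  · rw [xEnd_of_nonpos hb, Ring.lie_def, mul_zero, zero_mul, sub_zero, if_neg (by omega)]
  classical
  refine LinearMap.ext fun p => ?_
  simp only [dEnd, xEnd, if_pos ha, if_pos hb, Ring.lie_def, LinearMap.sub_apply,
    Module.End.mul_apply, LinearMap.mulLeft_apply, Derivation.coeFn_coe, Derivation.leibniz,
    smul_eq_mul, pderiv_X, Pi.single_apply, toNat_toPNat'_inj hb ha, mul_ite, mul_one, mul_zero,
    add_sub_cancel_left]
  split_ifs <;> first | rfl | omega

noncomputable def heisenberg (m : ℤ) : 𝔼 := dEnd m + ((-m : ℤ) : ℝ) • xEnd (-m)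

theorem lie_dEnd_heisenberg (j l : ℤ) :
    ⁅dEnd j, heisenberg l⁆ = if j = -l ∧ 0 < j then (j : ℝ) • 1 else 0 := by
  rw [heisenberg, Ring.lie_add, lie_smul, (commute_dEnd j l).lie_eq, lie_dEnd_xEnd, zero_add]
  split_ifs with h
  · rw [h.1]
  · rw [smul_zero]

theorem lie_xEnd_heisenberg (j l : ℤ) :
    ⁅xEnd j, heisenberg l⁆ = if j = l ∧ 0 < j then (-1 : ℝ) • 1 else 0 := by
  rw [heisenberg, Ring.lie_add, lie_smul, (commute_xEnd j (-l)).lie_eq, smul_zero, add_zero,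
    ← Ring.lie_skew, lie_dEnd_xEnd]
  split_ifs <;> first | omega | module

theorem lie_heisenberg_heisenberg (k l : ℤ) :
    ⁅heisenberg k, heisenberg l⁆ = if k = -l then (k : ℝ) • 1 else 0 := by
  rw [heisenberg, Ring.add_lie, smul_lie, lie_dEnd_heisenberg, lie_xEnd_heisenberg]
  split_ifs <;> first | omega | (push_cast; module) | (obtain rfl : k = 0 := (by omega); simp)

noncomputable def sugawaraDD (k : ℤ) : 𝔼 :=
  ∑ i ∈ Finset.Icc 1 (k - 1), dEnd i * dEnd (k - i)

noncomputable def sugawaraXD (k N : ℤ) : 𝔼 :=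
  ∑ i ∈ Finset.Icc 1 N, (i : ℝ) • (xEnd i * dEnd (i + k))

noncomputable def sugawaraXX (k : ℤ) : 𝔼 :=
  ∑ i ∈ Finset.Icc 1 (-k - 1), ((i : ℝ) * ((-k - i : ℤ) : ℝ)) • (xEnd i * xEnd (-k - i))

theorem lie_sugawaraDD_heisenberg (k l : ℤ) :
    ⁅sugawaraDD k, heisenberg l⁆ = if l < 0 then (-2 * l : ℝ) • dEnd (k + l) else 0 := by
  have hterm : ∀ i ∈ Finset.Icc 1 (k - 1), ⁅dEnd i * dEnd (k - i), heisenberg l⁆ =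
      (if i = k + l then (-l : ℝ) • dEnd (k + l) else 0) +
        (if i = -l then (-l : ℝ) • dEnd (k + l) else 0) := by
    intro i hi
    rw [Finset.mem_Icc] at hi
    rw [Ring.mul_lie, lie_dEnd_heisenberg, lie_dEnd_heisenberg]
    congr 1
    · by_cases h : i = k + l
      · subst h
        rw [if_pos (by omega), if_pos rfl, sub_add_cancel_left, mul_smul_comm, mul_one]
        push_cast; rfl
      · rw [if_neg (by omega), if_neg h, mul_zero]
    · by_cases h : i = -l
      · rw [if_pos ⟨h, by omega⟩, if_pos h, h, smul_mul_assoc, one_mul, sub_neg_eq_add]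
        push_cast; rfl
      · rw [if_neg (by omega), if_neg h, zero_mul]
  rw [sugawaraDD, Ring.sum_lie, Finset.sum_congr rfl hterm, Finset.sum_add_distrib,
    Finset.sum_ite_eq', Finset.sum_ite_eq']
  rcases le_or_gt (k + l) 0 with h | h
  · simp [dEnd_of_nonpos h]
  · simp only [Finset.mem_Icc]
    split_ifs <;> first | omega | module

theorem lie_sugawaraXD_heisenberg {k l N : ℤ} (hl : l ≤ N) (hkl : -(k + l) ≤ N) :
    ⁅sugawaraXD k N, heisenberg l⁆ =
      (if l < 0 then ((l : ℝ) * (k + l)) • xEnd (-(k + l)) else 0) +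
        (if 0 < l then (-l : ℝ) • dEnd (k + l) else 0) := by
  have hterm : ∀ i ∈ Finset.Icc 1 N, ⁅(i : ℝ) • (xEnd i * dEnd (i + k)), heisenberg l⁆ =
      (if i = -(k + l) then
          (if l < 0 then ((l : ℝ) * (k + l)) • xEnd (-(k + l)) else 0) else 0) +
        (if i = l then (-l : ℝ) • dEnd (k + l) else 0) := by
    intro i hi
    rw [Finset.mem_Icc] at hi
    rw [smul_lie, Ring.mul_lie, lie_dEnd_heisenberg, lie_xEnd_heisenberg, smul_add]
    congr 1
    · by_cases h : i = -(k + l)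
      · subst h
        by_cases hl0 : l < 0
        · rw [if_pos (by omega), if_pos rfl, if_pos hl0, mul_smul_comm, mul_one, smul_smul]
          push_cast; ring_nf
        · rw [if_neg (by omega), if_pos rfl, if_neg hl0, mul_zero, smul_zero]
      · rw [if_neg (by omega), if_neg h, mul_zero, smul_zero]
    · by_cases h : i = l
      · subst h
        rw [if_pos ⟨rfl, by omega⟩, if_pos rfl, smul_mul_assoc, one_mul, add_comm i k]
        module
      · rw [if_neg (by omega), if_neg h, zero_mul, smul_zero]
  rw [sugawaraXD, Ring.sum_lie, Finset.sum_congr rfl hterm, Finset.sum_add_distrib,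
    Finset.sum_ite_eq', Finset.sum_ite_eq']
  simp only [Finset.mem_Icc]
  by_cases hx : 0 < -(k + l)
  · split_ifs <;> first | omega | rfl
  · rw [xEnd_of_nonpos (not_lt.1 hx)]
    split_ifs <;> first | omega | module

theorem lie_sugawaraXX_heisenberg (k l : ℤ) :
    ⁅sugawaraXX k, heisenberg l⁆ =
      if 0 < l then (2 * l * (k + l) : ℝ) • xEnd (-(k + l)) else 0 := by
  have hterm : ∀ i ∈ Finset.Icc 1 (-k - 1),
      ⁅((i : ℝ) * ((-k - i : ℤ) : ℝ)) • (xEnd i * xEnd (-k - i)), heisenberg l⁆ =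
      (if i = -(k + l) then ((l : ℝ) * (k + l)) • xEnd (-(k + l)) else 0) +
        (if i = l then ((l : ℝ) * (k + l)) • xEnd (-(k + l)) else 0) := by
    intro i hi
    rw [Finset.mem_Icc] at hi
    rw [smul_lie, Ring.mul_lie, lie_xEnd_heisenberg, lie_xEnd_heisenberg, smul_add]
    congr 1
    · by_cases h : i = -(k + l)
      · subst h
        rw [if_pos ⟨by ring, by omega⟩, if_pos rfl, show -k - -(k + l) = l by ring,
          mul_smul_comm, mul_one, smul_smul]
        push_cast; ring_nf
      · rw [if_neg (by omega), if_neg h, mul_zero, smul_zero]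
    · by_cases h : i = l
      · subst h
        rw [if_pos ⟨rfl, by omega⟩, if_pos rfl, show -k - i = -(k + i) by ring,
          smul_mul_assoc, one_mul, smul_smul]
        push_cast; ring_nf
      · rw [if_neg (by omega), if_neg h, zero_mul, smul_zero]
  rw [sugawaraXX, Ring.sum_lie, Finset.sum_congr rfl hterm, Finset.sum_add_distrib,
    Finset.sum_ite_eq', Finset.sum_ite_eq']
  simp only [Finset.mem_Icc]
  by_cases hx : 0 < -(k + l)
  · split_ifs <;> first | omega | module
  · rw [xEnd_of_nonpos (not_lt.1 hx)]
    split_ifs <;> first | omega | module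

noncomputable def sugawara (k N : ℤ) : 𝔼 :=
  (1 / 2 : ℝ) • (sugawaraDD k + (2 : ℝ) • sugawaraXD k N + sugawaraXX k)

theorem lie_sugawara_heisenberg {k l N : ℤ} (hl : l ≤ N) (hkl : -(k + l) ≤ N) :
    ⁅sugawara k N, heisenberg l⁆ = (-l : ℝ) • heisenberg (k + l) := by
  rw [sugawara, smul_lie, Ring.add_lie, Ring.add_lie, smul_lie, lie_sugawaraDD_heisenberg,
    lie_sugawaraXD_heisenberg hl hkl, lie_sugawaraXX_heisenberg, heisenberg]
  rcases lt_trichotomy l 0 with h | rfl | h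
  · simp only [h, h.not_gt, if_true, if_false]
    push_cast; module
  · simp
  · simp only [h, h.not_gt, if_true, if_false]
    push_cast; module

noncomputable def J1End (l : ℤ) (n : ℝ) : 𝔼 := heisenberg l + (if l = 0 then n else 0) • 1

noncomputable def J2End (k : ℤ) (n : ℝ) (N : ℤ) : 𝔼 :=
  sugawara k N + (n + ((k : ℝ) + 1) / 2) • heisenberg k +
    (if k = 0 then n * (n + 1) / 2 else 0) • 1

theorem lie_J2End_J1End {k l N : ℤ} (n : ℝ) (hl : l ≤ N) (hkl : -(k + l) ≤ N) :
    ⁅J2End k n N, J1End l n⁆ =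
      (-l : ℝ) • J1End (k + l) n + (if k = -l then (k : ℝ) * (k + 1) / 2 else 0) • 1 := by
  simp only [J2End, J1End, Ring.add_lie, Ring.lie_add, smul_lie, lie_smul, Ring.lie_one,
    Ring.one_lie, lie_sugawara_heisenberg hl hkl, lie_heisenberg_heisenberg]
  by_cases hk : k = -l
  · subst hk
    split_ifs <;> first | omega | (push_cast; module)
  · split_ifs <;> first | omega | module

theorem J1_eq_J1End_apply (l : ℤ) (n : ℝ) (p : 𝒫) : J1 l n p = J1End l n p := by
  simp only [J1, J1End, heisenberg, LinearMap.add_apply, LinearMap.smul_apply, Module.End.one_apply,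
    dEnd_apply, xEnd_apply]

theorem dEnd_J1End_apply_eq_zero {M l j : ℤ} (n : ℝ) {p : 𝒫}
    (hp : ∀ j, M < j → dEnd j p = 0)
    (hj : max M (-l) < j) : dEnd j (J1End l n p) = 0 := by
  have hc : Commute (dEnd j) (heisenberg l) := by
    rw [commute_iff_lie_eq, lie_dEnd_heisenberg, if_neg (by omega)]
  rw [J1End, LinearMap.add_apply, map_add, ← Module.End.mul_apply, hc.eq, Module.End.mul_apply,
    LinearMap.smul_apply, Module.End.one_apply, map_smul, hp j (by omega), map_zero, smul_zero,
    add_zero]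

theorem finsum_eq_sugawaraXD_apply {k N : ℤ} {p : 𝒫} (hp : ∀ j, N + k < j → dEnd j p = 0) :
    ∑ᶠ i : ℕ+, ((i : ℕ) : ℝ) • ((X i : 𝒫) * Dt (((i : ℕ) : ℤ) + k) p) =
      sugawaraXD k N p := by
  set g : ℤ → 𝒫 := fun i => (i : ℝ) • xEnd i (dEnd (i + k) p)
  have hg (i : ℕ+) :
      ((i : ℕ) : ℝ) • ((X i : 𝒫) * Dt (((i : ℕ) : ℤ) + k) p) = g i := by
    simp only [g, xEnd_natCast_apply, dEnd_apply, Int.cast_natCast]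
  have hinj : Set.InjOn (fun i : ℕ+ => ((i : ℕ) : ℤ))
      ((fun i : ℕ+ => ((i : ℕ) : ℤ)) ⁻¹' ↑(Finset.Icc 1 N)) :=
    fun a _ b _ h => PNat.coe_inj.1 (Int.ofNat_inj.1 h)
  rw [finsum_congr hg, finsum_eq_sum_of_support_subset _ (s := (Finset.Icc 1 N).preimage _ hinj),
    Finset.sum_preimage _ _ hinj g]
  · simp [sugawaraXD, g, LinearMap.sum_apply]
  · intro x hx hnot
    rw [Finset.mem_Icc] at hx
    exact (hnot ⟨x.toNat.toPNat', coe_toNat_toPNat' (by omega)⟩).elim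
  · intro i hi
    simp only [Function.mem_support, Finset.coe_preimage, Set.mem_preimage, Finset.coe_Icc,
      Set.mem_Icc] at hi ⊢
    refine ⟨by have := i.pos; omega, not_lt.1 fun hiN => hi ?_⟩
    simp only [g]
    rw [hp _ (by omega), map_zero, smul_zero]

theorem J2_eq_J2End_apply {k N : ℤ} (n : ℝ) {p : 𝒫}
    (hp : ∀ j, N + k < j → dEnd j p = 0) :
    J2 k n p = J2End k n N p := by
  rw [J2, finsum_eq_sugawaraXD_apply hp]
  simp only [J2End, sugawara, sugawaraDD, sugawaraXD, sugawaraXX, heisenberg, LinearMap.add_apply,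
    LinearMap.smul_apply, Module.End.one_apply, LinearMap.sum_apply, Module.End.mul_apply,
    dEnd_apply, xEnd_apply]

end MixedRelation

open MixedRelation in
/-- The mixed relation
`[𝕁^{(2)}_{k,n}, 𝕁^{(1)}_{l,n}] = −l 𝕁^{(1)}_{k+l,n} + (k(k+1)/2) δ_{k,−l} id`
as linear endomorphisms of `ℝ[t_1, t_2, …]` (stated pointwise). -/
theorem mixed_virasoro_heisenberg_relation (k l : ℤ) (n : ℝ) (p : MvPolynomial ℕ+ ℝ) :
    J2 k n (J1 l n p) - J1 l n (J2 k n p) =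
      (-(l : ℝ)) • J1 (k + l) n p +
        (if k = -l then ((k : ℝ) * ((k : ℝ) + 1) / 2) else 0) • p := by
  obtain ⟨M, hM⟩ := exists_forall_dEnd_apply_eq_zero p
  set N := max (max M (-l) - k) (max l (-(k + l)))
  have hp : ∀ j, N + k < j → dEnd j p = 0 := fun j hj => hM j (by omega)
  have hJp : ∀ j, N + k < j → dEnd j (J1End l n p) = 0 :=
    fun j hj => dEnd_J1End_apply_eq_zero (j := j) n hM (by omega)
  rw [J1_eq_J1End_apply, J2_eq_J2End_apply n hJp, J2_eq_J2End_apply n hp, J1_eq_J1End_apply,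
    J1_eq_J1End_apply]
  have h := congr($(lie_J2End_J1End (k := k) (l := l) (N := N) n (by omega) (by omega)) p)
  simpa only [Ring.lie_def, LinearMap.sub_apply, Module.End.mul_apply, LinearMap.add_apply,
    LinearMap.smul_apply, Module.End.one_apply] using h
end

section
/- For every integer m ≥ 1 and every c ∈ ℝ, det[ p_{i+j}(c) ]_{0≤i,j≤m−1} = ∏_{i=0}^{m−1} i!, where p_n(c) := e^{−c²/2} · (d/dy)^n (e^{y²/2}) |_{y=c}. -/
/-!
Write `p_n(c) = H_n(c)` for the polynomials `H_0 = 1`, `H_{n+1} = H_n' + X H_n`, so that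
`(d/dy)^n e^{y²/2} = H_n(y) e^{y²/2}`; they form an Appell sequence, `H_n' = n H_{n-1}`.
Leibniz' rule applied to `(d/dy)^i (H_j(y) e^{y²/2})` gives the addition formula
`H_{i+j} = ∑_k C(i,k) C(j,k) k! H_{i-k} H_{j-k}`, i.e. the Hankel matrix factors as
`L · diag(k!) · Lᵀ` with `L_{ik} = C(i,k) H_{i-k}(c)` lower unitriangular.
-/

open Polynomial Finset Matrix

open scoped Nat

section HermitePlus

variable (R : Type*) [CommSemiring R]

/-- Over `ℂ`, `hermitePlus ℂ n = i⁻ⁿ (Polynomial.hermite n).comp (i X)`. -/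
noncomputable def hermitePlus : ℕ → R[X]
  | 0 => 1
  | n + 1 => derivative (hermitePlus n) + X * hermitePlus n

@[simp]
theorem hermitePlus_zero : hermitePlus R 0 = 1 := rfl

theorem hermitePlus_succ (n : ℕ) :
    hermitePlus R (n + 1) = derivative (hermitePlus R n) + X * hermitePlus R n := rfl

theorem derivative_hermitePlus (n : ℕ) :
    derivative (hermitePlus R n) = n • hermitePlus R (n - 1) := by
  induction n with
  | zero => simp
  | succ n ih =>
    have hpred : n • (derivative (hermitePlus R (n - 1)) + X * hermitePlus R (n - 1)) =
        n • hermitePlus R n := by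
      cases n <;> simp [hermitePlus_succ]
    rw [hermitePlus_succ, derivative_add, derivative_mul, ih, derivative_smul, derivative_X,
      Nat.add_sub_cancel, succ_nsmul', ← hpred, smul_add, mul_smul_comm, one_mul]
    abel

theorem iterate_derivative_hermitePlus (n k : ℕ) :
    derivative^[k] (hermitePlus R n) = n.descFactorial k • hermitePlus R (n - k) := by
  induction k with
  | zero => simp
  | succ k ih =>
    rw [Function.iterate_succ_apply', ih, derivative_smul, derivative_hermitePlus, smul_smul,
      Nat.descFactorial_succ, mul_comm (n - k), Nat.sub_sub]

end HermitePlus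

theorem Polynomial.iteratedDeriv_eval {𝕜 : Type*} [NontriviallyNormedField 𝕜] (p : 𝕜[X])
    (k : ℕ) : iteratedDeriv k (fun x => p.eval x) = fun x => (derivative^[k] p).eval x := by
  induction k with
  | zero => simp
  | succ k ih =>
    ext x
    rw [iteratedDeriv_succ, ih, Polynomial.deriv, Function.iterate_succ_apply']

theorem iteratedDeriv_exp_half_sq (n : ℕ) :
    iteratedDeriv n (fun y => Real.exp (y ^ 2 / 2)) =
      fun x => (hermitePlus ℝ n).eval x * Real.exp (x ^ 2 / 2) := by
  induction n with
  | zero => simp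
  | succ n ih =>
    ext x
    have hexp : HasDerivAt (fun y => Real.exp (y ^ 2 / 2)) (Real.exp (x ^ 2 / 2) * x) x := by
      simpa using ((hasDerivAt_pow 2 x).div_const 2).exp
    rw [iteratedDeriv_succ, ih, (((hermitePlus ℝ n).hasDerivAt x).fun_mul hexp).deriv,
      hermitePlus_succ]
    simp only [eval_add, eval_mul, eval_X]
    ring

theorem eval_hermitePlus_add (i j : ℕ) (x : ℝ) :
    (hermitePlus ℝ (i + j)).eval x = ∑ k ∈ range (i + 1),
      i.choose k * j.descFactorial k * (hermitePlus ℝ (i - k)).eval x *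
        (hermitePlus ℝ (j - k)).eval x := by
  have hg : ContDiff ℝ i fun y => Real.exp (y ^ 2 / 2) := by fun_prop
  have hp : ContDiff ℝ i fun y => (hermitePlus ℝ j).eval y := by
    simpa using (hermitePlus ℝ j).contDiff_aeval (𝕜 := ℝ) i
  have leibniz : iteratedDeriv (i + j) (fun y => Real.exp (y ^ 2 / 2)) x =
      iteratedDeriv i
        ((fun y => (hermitePlus ℝ j).eval y) * fun y => Real.exp (y ^ 2 / 2)) x := by
    rw [iteratedDeriv_eq_iterate, Function.iterate_add_apply, ← iteratedDeriv_eq_iterate,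
      ← iteratedDeriv_eq_iterate, iteratedDeriv_exp_half_sq]
    rfl
  rw [iteratedDeriv_mul hp.contDiffAt hg.contDiffAt, iteratedDeriv_exp_half_sq] at leibniz
  simp only [Polynomial.iteratedDeriv_eval, iteratedDeriv_exp_half_sq,
    iterate_derivative_hermitePlus, nsmul_eq_mul, eval_mul, eval_natCast] at leibniz
  refine mul_right_cancel₀ (Real.exp_pos (x ^ 2 / 2)).ne' ?_
  rw [leibniz, sum_mul]
  refine sum_congr rfl fun k _ => ?_
  ring

noncomputable def hermitePlusFactor (m : ℕ) (c : ℝ) : Matrix (Fin m) (Fin m) ℝ :=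
  of fun i k => ((i : ℕ).choose k : ℝ) * (hermitePlus ℝ (i - k)).eval c

theorem hankel_hermitePlus_eq (m : ℕ) (c : ℝ) :
    (of fun i j : Fin m => (hermitePlus ℝ (i + j)).eval c) =
      hermitePlusFactor m c * diagonal (fun k : Fin m => ((k : ℕ)! : ℝ)) *
        (hermitePlusFactor m c)ᵀ := by
  ext i j
  rw [mul_apply]
  simp only [of_apply, mul_diagonal, transpose_apply, hermitePlusFactor]
  rw [eval_hermitePlus_add, Fin.sum_univ_eq_sum_range (fun k =>
    ((i : ℕ).choose k : ℝ) * (hermitePlus ℝ (i - k)).eval c * (k ! : ℝ) *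
      (((j : ℕ).choose k : ℝ) * (hermitePlus ℝ (j - k)).eval c))]
  refine sum_subset (range_subset_range.mpr i.isLt) (fun k _ hk => ?_) |>.trans
    (sum_congr rfl fun k _ => ?_)
  · simp [Nat.choose_eq_zero_of_lt (not_lt.mp (mt mem_range.mpr hk))]
  · rw [Nat.descFactorial_eq_factorial_mul_choose]
    push_cast
    ring

theorem det_hermitePlusFactor (m : ℕ) (c : ℝ) : (hermitePlusFactor m c).det = 1 := by
  have hlower : (hermitePlusFactor m c).IsLowerTriangular := fun i k hik => by
    simp [hermitePlusFactor, Nat.choose_eq_zero_of_lt (show (i : ℕ) < k from hik)]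
  rw [det_of_isLowerTriangular _ hlower]
  exact prod_eq_one fun i _ => by simp [hermitePlusFactor]

theorem hankel_det_hermite_general (m : ℕ) (c : ℝ) :
    Matrix.det (Matrix.of fun i j : Fin m =>
        Real.exp (-c ^ 2 / 2) * iteratedDeriv ((i : ℕ) + (j : ℕ)) (fun y => Real.exp (y ^ 2 / 2)) c) =
      ∏ i ∈ Finset.range m, (i.factorial : ℝ) := by
  have hentry (n : ℕ) :
      Real.exp (-c ^ 2 / 2) * iteratedDeriv n (fun y => Real.exp (y ^ 2 / 2)) c =
        (hermitePlus ℝ n).eval c := by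
    rw [iteratedDeriv_exp_half_sq, mul_left_comm, ← Real.exp_add, neg_div, neg_add_cancel,
      Real.exp_zero, mul_one]
  simp only [hentry]
  rw [hankel_hermitePlus_eq, det_mul, det_mul, det_transpose, det_diagonal, det_hermitePlusFactor,
    one_mul, mul_one, Fin.prod_univ_eq_prod_range (fun k => (k ! : ℝ))]

/-- The `m×m` Hankel determinant of the polynomials `p_n(c) = e^{−c²/2} (d/dy)^n e^{y²/2}|_{y=c}`
equals `∏_{i=0}^{m−1} i!`, independently of `c`. -/
theorem hankel_det_hermite (m : ℕ) (hm : 1 ≤ m) (c : ℝ) :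
    Matrix.det (Matrix.of fun i j : Fin m =>
        Real.exp (-c ^ 2 / 2) * iteratedDeriv ((i : ℕ) + (j : ℕ)) (fun y => Real.exp (y ^ 2 / 2)) c) =
      ∏ i ∈ Finset.range m, (i.factorial : ℝ) :=
  hankel_det_hermite_general m c
end

section
/- For every integer m ≥ 1 and every c ∈ ℝ, det[ μ_{i+j}(c) ]_{0≤i,j≤m−1} = (2π)^{m/2} · e^{m c²/2} · ∏_{i=0}^{m−1} i!, where μ_n(c) := ∫_ℝ x^n e^{−x²/2 + cx} dx. -/
/-!
Write `φ_c(p) = ∫ p(x) e^{-x²/2+cx} dx`, so that the Hankel matrix is `(φ_c(X^{i+j}))`. Multiplying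
it on the left by the unitriangular coefficient matrix of the monic polynomials `Q_i = He_i(X - c)`
(shifted probabilists' Hermite polynomials) gives `(φ_c(Q_i X^j))` with the same determinant.
Since `(Q_n e^{-x²/2+cx})' = -Q_{n+1} e^{-x²/2+cx}`, integrating by parts `n` times gives
`φ_c(Q_n p) = φ_c(p^{(n)})`, so this matrix is upper triangular with diagonal entries
`φ_c(i!) = i! √(2π) e^{c²/2}`.
-/

open Polynomial MeasureTheory Real Matrix

noncomputable section

namespace HankelGauss

section Algebra

variable {R : Type*} [CommRing R] {m : ℕ}

theorem det_coeff_eq_one_of_monic (P : Fin m → R[X]) (hmonic : ∀ i, (P i).Monic)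
    (hdeg : ∀ i, (P i).natDegree = i) : (of fun i k : Fin m => (P i).coeff k).det = 1 := by
  have hlower : (of fun i k : Fin m => (P i).coeff k).IsLowerTriangular := fun i k hik =>
    coeff_eq_zero_of_natDegree_lt (by rw [hdeg]; exact hik)
  rw [det_of_isLowerTriangular _ hlower]
  refine Finset.prod_eq_one fun i _ => ?_
  simpa [hdeg i] using (hmonic i).coeff_natDegree

theorem det_hankel_eq_det_of_monic (φ : R[X] →ₗ[R] R) (P : Fin m → R[X])
    (hmonic : ∀ i, (P i).Monic) (hdeg : ∀ i, (P i).natDegree = i) :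
    (of fun i j : Fin m => φ (X ^ ((i : ℕ) + j))).det =
      (of fun i j : Fin m => φ (P i * X ^ (j : ℕ))).det := by
  have hP : ∀ i, P i = ∑ k : Fin m, C ((P i).coeff k) * X ^ (k : ℕ) := fun i => by
    rw [Fin.sum_univ_eq_sum_range (fun k => C ((P i).coeff k) * X ^ k),
      ← as_sum_range_C_mul_X_pow' _ (by rw [hdeg]; exact i.isLt)]
  have hfactor : (of fun i j : Fin m => φ (P i * X ^ (j : ℕ))) =
      of (fun i k : Fin m => (P i).coeff k) * of fun i j : Fin m => φ (X ^ ((i : ℕ) + j)) := by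
    ext i j
    conv_lhs => rw [of_apply, hP i]
    simp [mul_apply, Finset.sum_mul, ← pow_add, ← smul_eq_C_mul]
  rw [hfactor, det_mul, det_coeff_eq_one_of_monic P hmonic hdeg, one_mul]

end Algebra

def gaussianWeight (c x : ℝ) : ℝ := exp (-x ^ 2 / 2 + c * x)

theorem gaussianWeight_eq (c x : ℝ) :
    gaussianWeight c x = exp (c ^ 2 / 2) * gaussianWeight 0 (x - c) := by
  rw [gaussianWeight, gaussianWeight, ← exp_add]
  ring_nf

theorem integrable_eval_mul_gaussianWeight_zero (p : ℝ[X]) :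
    Integrable fun x => p.eval x * gaussianWeight 0 x := by
  induction p using Polynomial.induction_on' with
  | add p q hp hq => simp only [eval_add, add_mul]; exact hp.add hq
  | monomial n a =>
    have h := integrable_rpow_mul_exp_neg_mul_sq (b := 1 / 2) (by norm_num)
      (s := n) (by linarith [n.cast_nonneg (α := ℝ)])
    refine (h.const_mul a).congr (.of_forall fun x => ?_)
    simp only [eval_monomial, gaussianWeight, rpow_natCast]
    ring_nf

theorem integrable_eval_mul_gaussianWeight (p : ℝ[X]) (c : ℝ) :
    Integrable fun x => p.eval x * gaussianWeight c x := by
  refine (((integrable_eval_mul_gaussianWeight_zero (p.comp (X + C c))).const_mul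
    (exp (c ^ 2 / 2))).comp_sub_right c).congr (.of_forall fun x => ?_)
  simp only [eval_comp, eval_add, eval_X, eval_C, sub_add_cancel, gaussianWeight_eq c x]
  ring

theorem integral_gaussianWeight (c : ℝ) :
    ∫ x, gaussianWeight c x = √(2 * π) * exp (c ^ 2 / 2) := by
  simp_rw [gaussianWeight_eq c, integral_const_mul,
    integral_sub_right_eq_self (fun x => gaussianWeight 0 x) c]
  have h := integral_gaussian (1 / 2)
  rw [show π / (1 / 2) = 2 * π by ring] at h
  simp only [gaussianWeight, ← h]
  ring_nf

theorem hasDerivAt_gaussianWeight (c x : ℝ) :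
    HasDerivAt (gaussianWeight c) ((c - x) * gaussianWeight c x) x := by
  have h : HasDerivAt (fun x : ℝ => -x ^ 2 / 2 + c * x) (c - x) x := by
    refine ((((hasDerivAt_pow 2 x).neg).div_const 2).add
      ((hasDerivAt_id x).const_mul c)).congr_deriv ?_
    norm_num
    ring
  rw [mul_comm]
  exact h.exp

def gaussianFunctional (c : ℝ) : ℝ[X] →ₗ[ℝ] ℝ where
  toFun p := ∫ x, p.eval x * gaussianWeight c x
  map_add' p q := by
    simp only [eval_add, add_mul]
    exact integral_add (integrable_eval_mul_gaussianWeight p c)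
      (integrable_eval_mul_gaussianWeight q c)
  map_smul' a p := by
    simp only [eval_smul, smul_eq_mul, mul_assoc, integral_const_mul, RingHom.id_apply]

theorem gaussianFunctional_apply (c : ℝ) (p : ℝ[X]) :
    gaussianFunctional c p = ∫ x, p.eval x * gaussianWeight c x := rfl

def shiftedHermite (c : ℝ) (n : ℕ) : ℝ[X] := ((hermite n).map (Int.castRingHom ℝ)).comp (X - C c)

theorem shiftedHermite_zero (c : ℝ) : shiftedHermite c 0 = 1 := by
  simp [shiftedHermite]

theorem shiftedHermite_succ (c : ℝ) (n : ℕ) :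
    shiftedHermite c (n + 1) =
      (X - C c) * shiftedHermite c n - derivative (shiftedHermite c n) := by
  simp [shiftedHermite, hermite_succ, derivative_comp, derivative_map]

theorem shiftedHermite_monic (c : ℝ) (n : ℕ) : (shiftedHermite c n).Monic :=
  ((hermite_monic n).map _).comp_X_sub_C c

theorem natDegree_shiftedHermite (c : ℝ) (n : ℕ) : (shiftedHermite c n).natDegree = n := by
  rw [shiftedHermite, natDegree_comp, (hermite_monic n).natDegree_map, natDegree_hermite,
    natDegree_X_sub_C, mul_one]

theorem hasDerivAt_shiftedHermite_mul_gaussianWeight (c : ℝ) (n : ℕ) (x : ℝ) :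
    HasDerivAt (fun x => (shiftedHermite c n).eval x * gaussianWeight c x)
      (-((shiftedHermite c (n + 1)).eval x * gaussianWeight c x)) x := by
  refine ((shiftedHermite c n).hasDerivAt x |>.mul (hasDerivAt_gaussianWeight c x)).congr_deriv ?_
  simp only [shiftedHermite_succ, eval_sub, eval_mul, eval_X, eval_C]
  ring

theorem gaussianFunctional_shiftedHermite_succ_mul (c : ℝ) (n : ℕ) (p : ℝ[X]) :
    gaussianFunctional c (shiftedHermite c (n + 1) * p) =
      gaussianFunctional c (shiftedHermite c n * derivative p) := by
  have hparts := integral_mul_deriv_eq_deriv_mul_of_integrable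
    (fun x _ => p.hasDerivAt x)
    (fun x _ => hasDerivAt_shiftedHermite_mul_gaussianWeight c n x)
    (by simpa [Pi.mul_def, mul_assoc] using
      (integrable_eval_mul_gaussianWeight (p * shiftedHermite c (n + 1)) c).neg)
    (by simpa [Pi.mul_def, mul_assoc] using
      integrable_eval_mul_gaussianWeight (derivative p * shiftedHermite c n) c)
    (by simpa [Pi.mul_def, mul_assoc] using
      integrable_eval_mul_gaussianWeight (p * shiftedHermite c n) c)
  simp only [mul_neg, integral_neg, neg_inj] at hparts
  simp only [gaussianFunctional_apply, eval_mul]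
  convert hparts using 1 <;> congr 1 <;> funext x <;> ring

theorem gaussianFunctional_shiftedHermite_mul (c : ℝ) (n : ℕ) (p : ℝ[X]) :
    gaussianFunctional c (shiftedHermite c n * p) = gaussianFunctional c (derivative^[n] p) := by
  induction n generalizing p with
  | zero => rw [shiftedHermite_zero, one_mul, Function.iterate_zero_apply]
  | succ n ih =>
    rw [gaussianFunctional_shiftedHermite_succ_mul, ih, Function.iterate_succ_apply]

theorem gaussianFunctional_shiftedHermite_mul_X_pow_of_lt (c : ℝ) {i j : ℕ} (h : j < i) :
    gaussianFunctional c (shiftedHermite c i * X ^ j) = 0 := by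
  rw [gaussianFunctional_shiftedHermite_mul, iterate_derivative_eq_zero (by simpa using h),
    map_zero]

theorem gaussianFunctional_shiftedHermite_mul_X_pow_self (c : ℝ) (i : ℕ) :
    gaussianFunctional c (shiftedHermite c i * X ^ i) =
      i.factorial * (√(2 * π) * exp (c ^ 2 / 2)) := by
  rw [gaussianFunctional_shiftedHermite_mul, iterate_derivative_X_pow_eq_smul,
    Nat.descFactorial_self, Nat.sub_self, pow_zero, map_smul, smul_eq_mul,
    gaussianFunctional_apply]
  simp [integral_gaussianWeight]

theorem det_hankel_gaussianFunctional (m : ℕ) (c : ℝ) :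
    (of fun i j : Fin m => gaussianFunctional c (X ^ ((i : ℕ) + j))).det =
      ∏ i : Fin m, ((i : ℕ).factorial * (√(2 * π) * exp (c ^ 2 / 2))) := by
  rw [det_hankel_eq_det_of_monic _ (fun i => shiftedHermite c i)
      (fun i => shiftedHermite_monic c i) (fun i => natDegree_shiftedHermite c i),
    det_of_isUpperTriangular]
  · simp only [of_apply, gaussianFunctional_shiftedHermite_mul_X_pow_self]
  · exact fun i j hji => gaussianFunctional_shiftedHermite_mul_X_pow_of_lt c hji

end HankelGauss

open HankelGauss in
theorem hankel_det_gaussian_moments_general (m : ℕ) (c : ℝ) :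
    Matrix.det (Matrix.of fun i j : Fin m =>
        ∫ x : ℝ, x ^ ((i : ℕ) + (j : ℕ)) * Real.exp (-x ^ 2 / 2 + c * x)) =
      (2 * Real.pi) ^ ((m : ℝ) / 2) * Real.exp ((m : ℝ) * c ^ 2 / 2) *
        ∏ i ∈ Finset.range m, (i.factorial : ℝ) := by
  have hmoments : (of fun i j : Fin m =>
      ∫ x : ℝ, x ^ ((i : ℕ) + (j : ℕ)) * exp (-x ^ 2 / 2 + c * x)) =
        of fun i j : Fin m => gaussianFunctional c (X ^ ((i : ℕ) + j)) := by
    ext i j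
    simp [gaussianFunctional_apply, gaussianWeight]
  have hsqrt : √(2 * π) ^ m = (2 * π) ^ ((m : ℝ) / 2) := by
    rw [sqrt_eq_rpow, ← rpow_natCast, ← rpow_mul (by positivity)]
    ring_nf
  have hexp : exp (c ^ 2 / 2) ^ m = exp (m * c ^ 2 / 2) := by
    rw [← exp_nat_mul]
    ring_nf
  rw [hmoments, det_hankel_gaussianFunctional, Finset.prod_mul_distrib, Finset.prod_const,
    Finset.card_univ, Fintype.card_fin, mul_pow, hsqrt, hexp,
    Fin.prod_univ_eq_prod_range (fun i => (i.factorial : ℝ))]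
  ring

/-- The `m×m` Hankel determinant of the moments `μ_n(c) = ∫_ℝ x^n e^{−x²/2+cx} dx` equals
`(2π)^{m/2} e^{mc²/2} ∏_{i=0}^{m−1} i!`. -/
theorem hankel_det_gaussian_moments (m : ℕ) (hm : 1 ≤ m) (c : ℝ) :
    Matrix.det (Matrix.of fun i j : Fin m =>
        ∫ x : ℝ, x ^ ((i : ℕ) + (j : ℕ)) * Real.exp (-x ^ 2 / 2 + c * x)) =
      (2 * Real.pi) ^ ((m : ℝ) / 2) * Real.exp ((m : ℝ) * c ^ 2 / 2) *
        ∏ i ∈ Finset.range m, (i.factorial : ℝ) :=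
  hankel_det_gaussian_moments_general m c
end
end
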